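/- arXiv:2110.08089 — 2 statements merged into one kernel-verified Lean document; each statement's English description precedes it below -/
import Mathlib

section
/- Let d_n = c/log n for a constant c > 0, and ψ_j(d_n) = Γ(j+d_n)/(Γ(d_n)Γ(j+1)). If h = h_n = ⌊n^α⌋ for some α ∈ (0,1), then h^{-1} Σ_{l=0}^{h-1} (Σ_{j=0}^{l} ψ_j(d_n))² → e^{2cα} as n → ∞. -/
/-!
The partial sums are again fractional binomial coefficients,
`∑_{j ≤ l} ψ_j(d) = ψ_l(d+1) = ∏_{k<l} (1 + d/(k+1))`, and comparing each factor with
`exp (d/(k+1))` and `exp (d/(k+2))` pins `ψ_l(d+1)` between `exp (d (H_{l+1} - 1))` and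
`exp (d H_l)`. Squaring, `ψ_l(2d+1) ≤ ψ_l(d+1)² ≤ ψ_h(d+1)²` for `l < h`, and the lower sum
telescopes: `∑_{l<h} ψ_l(2d+1) = ψ_{h-1}(2d+2) = h ψ_h(2d+1)/(2d+1)`. Hence the average is
`exp (2 d log h + O(d))`, and `d_n log h_n → cα` because `log ⌊n^α⌋ = α log n + o(1)`.
-/

open Real Filter

/-- Fractional binomial coefficients `ψ_j(d) = Γ(j+d)/(Γ(d)Γ(j+1))`. -/
noncomputable def psi (d : ℝ) (j : ℕ) : ℝ :=
  Real.Gamma ((j : ℝ) + d) / (Real.Gamma d * Real.Gamma ((j : ℝ) + 1))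

open Finset Topology

lemma psi_zero {d : ℝ} (hd : Gamma d ≠ 0) : psi d 0 = 1 := by
  simp [psi, hd]

lemma psi_pos {d : ℝ} (hd : 0 < d) (l : ℕ) : 0 < psi d l := by
  unfold psi
  positivity

lemma psi_succ (d : ℝ) (l : ℕ) : psi d (l + 1) = psi d l * ((l + d) / (l + 1)) := by
  rcases eq_or_ne ((l : ℝ) + d) 0 with hld | hld
  · -- `d = -l` is a pole: `Γ d = 0`, so both sides are the junk value `0`.
    have : d = -(l : ℕ) := by linarith
    simp [psi, this, Gamma_neg_nat_eq_zero]
  · simp only [psi, Nat.cast_succ, add_right_comm _ (1 : ℝ) d, Gamma_add_one hld,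
      Gamma_add_one (Nat.cast_add_one_ne_zero l)]
    field_simp

lemma psi_succ_eq_mul_psi_add_one {d : ℝ} (hd : d ≠ 0) (l : ℕ) :
    psi d (l + 1) = d / (l + 1) * psi (d + 1) l := by
  simp only [psi, Nat.cast_succ, Gamma_add_one hd, Gamma_add_one (Nat.cast_add_one_ne_zero l)]
  rw [add_right_comm, add_assoc]
  field_simp

lemma sum_range_succ_psi {d : ℝ} (hd : 0 < d) (l : ℕ) :
    ∑ j ∈ range (l + 1), psi d j = psi (d + 1) l := by
  induction l with
  | zero =>
    have hd1 : 0 < d + 1 := by linarith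
    simp [psi_zero (Gamma_pos_of_pos hd).ne', psi_zero (Gamma_pos_of_pos hd1).ne']
  | succ l ih =>
    rw [sum_range_succ, ih, psi_succ_eq_mul_psi_add_one hd.ne', psi_succ (d + 1)]
    field_simp
    ring

lemma psi_add_one_eq_prod {d : ℝ} (hd : -1 < d) (l : ℕ) :
    psi (d + 1) l = ∏ k ∈ range l, (1 + d / (k + 1)) := by
  induction l with
  | zero => exact psi_zero (Gamma_pos_of_pos (by linarith)).ne'
  | succ l ih =>
    rw [psi_succ, ih, prod_range_succ]
    field_simp
    ring

lemma exp_div_nat_add_two_le {d : ℝ} (hd0 : 0 ≤ d) (hd1 : d ≤ 1) (k : ℕ) :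
    exp (d / (k + 2)) ≤ 1 + d / (k + 1) := by
  have hk : (0 : ℝ) < k + 1 := by positivity
  calc exp (d / (k + 2)) ≤ exp (1 - (1 + d / (k + 1))⁻¹) := by
        gcongr
        rw [div_le_iff₀ (by positivity)]
        field_simp
        nlinarith
    _ ≤ 1 + d / (k + 1) := by
        have hpos : 0 < 1 + d / (k + 1) := by positivity
        exact (exp_le_exp.2 (one_sub_inv_le_log_of_pos hpos)).trans_eq (exp_log hpos)

lemma cast_harmonic_eq_sum_range (n : ℕ) :
    (harmonic n : ℝ) = ∑ k ∈ range n, 1 / ((k : ℝ) + 1) := by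
  simp [harmonic]

lemma psi_add_one_mono {d : ℝ} (hd : 0 ≤ d) : Monotone (psi (d + 1)) := by
  refine monotone_nat_of_le_succ fun l => ?_
  rw [psi_add_one_eq_prod (by linarith), psi_add_one_eq_prod (by linarith), prod_range_succ]
  refine le_mul_of_one_le_right (prod_nonneg fun k _ => by positivity) ?_
  exact le_add_of_nonneg_right (by positivity)

lemma psi_two_mul_add_one_le_sq {d : ℝ} (hd : 0 ≤ d) (l : ℕ) :
    psi (2 * d + 1) l ≤ psi (d + 1) l ^ 2 := by
  rw [psi_add_one_eq_prod (by linarith), psi_add_one_eq_prod (by linarith), ← prod_pow]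
  refine prod_le_prod (fun k _ => by positivity) fun k _ => ?_
  rw [mul_div_assoc]
  nlinarith [sq_nonneg (d / (k + 1))]

lemma psi_add_one_le_exp {d : ℝ} (hd : 0 ≤ d) (l : ℕ) :
    psi (d + 1) l ≤ exp (d * harmonic l) := by
  rw [psi_add_one_eq_prod (by linarith), cast_harmonic_eq_sum_range, mul_sum, exp_sum]
  refine prod_le_prod (fun k _ => by positivity) fun k _ => ?_
  rw [mul_one_div, add_comm]
  exact add_one_le_exp _

lemma exp_le_psi_add_one {d : ℝ} (hd0 : 0 ≤ d) (hd1 : d ≤ 1) (l : ℕ) :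
    exp (d * (harmonic (l + 1) - 1)) ≤ psi (d + 1) l := by
  have : (harmonic (l + 1) : ℝ) - 1 = ∑ k ∈ range l, 1 / ((k : ℝ) + 2) := by
    rw [cast_harmonic_eq_sum_range, sum_range_succ']
    push_cast
    ring_nf
  rw [psi_add_one_eq_prod (by linarith), this, mul_sum, exp_sum]
  refine prod_le_prod (fun k _ => by positivity) fun k _ => ?_
  rw [mul_one_div]
  exact exp_div_nat_add_two_le hd0 hd1 k

lemma avg_sq_sum_psi_le {d : ℝ} (hd : 0 < d) (h : ℕ) :
    (h : ℝ)⁻¹ * ∑ l ∈ range h, (∑ j ∈ range (l + 1), psi d j) ^ 2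
      ≤ exp (2 * d * (1 + log h)) := by
  simp_rw [sum_range_succ_psi hd]
  calc (h : ℝ)⁻¹ * ∑ l ∈ range h, psi (d + 1) l ^ 2
      ≤ (h : ℝ)⁻¹ * ∑ _l ∈ range h, psi (d + 1) h ^ 2 := by
        gcongr with l hl
        · exact (psi_pos (by linarith) l).le
        · exact psi_add_one_mono hd.le (mem_range.1 hl).le
    _ ≤ psi (d + 1) h ^ 2 := by
        rw [sum_const, card_range, nsmul_eq_mul, ← mul_assoc]
        exact mul_le_of_le_one_left (sq_nonneg _)
          (inv_mul_le_one_of_le₀ le_rfl (Nat.cast_nonneg _))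
    _ ≤ exp (d * harmonic h) ^ 2 := by
        gcongr
        · exact (psi_pos (by linarith) h).le
        · exact psi_add_one_le_exp hd.le h
    _ = exp (2 * d * harmonic h) := by
        rw [← exp_nat_mul]
        ring_nf
    _ ≤ exp (2 * d * (1 + log h)) := by
        gcongr
        exact harmonic_le_one_add_log h

lemma exp_le_avg_sq_sum_psi {d : ℝ} (hd0 : 0 < d) (hd1 : 2 * d ≤ 1) {h : ℕ} (hh : h ≠ 0) :
    exp (2 * d * (log h - 1)) / (1 + 2 * d)
      ≤ (h : ℝ)⁻¹ * ∑ l ∈ range h, (∑ j ∈ range (l + 1), psi d j) ^ 2 := by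
  obtain ⟨m, rfl⟩ := Nat.exists_eq_succ_of_ne_zero hh
  simp_rw [sum_range_succ_psi hd0]
  have hsum : ∑ l ∈ range (m + 1), psi (2 * d + 1) l
      = (m + 1) / (2 * d + 1) * psi (2 * d + 1) (m + 1) := by
    rw [sum_range_succ_psi (by positivity), psi_succ_eq_mul_psi_add_one (by positivity)]
    field_simp
  have hlog : log (m + 1 : ℕ) ≤ harmonic (m + 1 + 1) :=
    (log_le_log (by positivity) (by push_cast; linarith)).trans (log_add_one_le_harmonic _)
  calc exp (2 * d * (log (m + 1 : ℕ) - 1)) / (1 + 2 * d)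
      ≤ exp (2 * d * (harmonic (m + 1 + 1) - 1)) / (1 + 2 * d) := by gcongr
    _ ≤ psi (2 * d + 1) (m + 1) / (1 + 2 * d) := by
        gcongr
        exact exp_le_psi_add_one (by positivity) hd1 (m + 1)
    _ = ((m + 1 : ℕ) : ℝ)⁻¹ * ∑ l ∈ range (m + 1), psi (2 * d + 1) l := by
        rw [hsum]
        push_cast
        field_simp
        ring
    _ ≤ _ := by
        gcongr with l
        exact psi_two_mul_add_one_le_sq hd0.le l

lemma tendsto_div_log_mul_log_floor_rpow (c : ℝ) {α : ℝ} (hα : 0 < α) :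
    Tendsto (fun n : ℕ => c / log n * log ⌊(n : ℝ) ^ α⌋₊) atTop (𝓝 (c * α)) := by
  have hpow : Tendsto (fun n : ℕ => (n : ℝ) ^ α) atTop atTop :=
    (tendsto_rpow_atTop hα).comp tendsto_natCast_atTop_atTop
  have hratio : Tendsto (fun n : ℕ => log (⌊(n : ℝ) ^ α⌋₊ / (n : ℝ) ^ α)) atTop (𝓝 0) := by
    have := (continuousAt_log one_ne_zero).tendsto.comp (tendsto_nat_floor_div_atTop.comp hpow)
    rwa [log_one] at this
  have hinv : Tendsto (fun n : ℕ => c / log n) atTop (𝓝 0) :=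
    tendsto_const_nhds.div_atTop (tendsto_log_atTop.comp tendsto_natCast_atTop_atTop)
  have hsplit : ∀ᶠ n : ℕ in atTop, c / log n * log (⌊(n : ℝ) ^ α⌋₊ / (n : ℝ) ^ α) + c * α
      = c / log n * log ⌊(n : ℝ) ^ α⌋₊ := by
    filter_upwards [eventually_gt_atTop 1, hpow.eventually_ge_atTop 1] with n hn hn1
    have hn0 : (0 : ℝ) < n := by positivity
    have hlog : log (n : ℝ) ≠ 0 := (log_pos (by exact_mod_cast hn)).ne'
    have hfloor : (⌊(n : ℝ) ^ α⌋₊ : ℝ) ≠ 0 := by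
      exact_mod_cast (Nat.floor_pos.2 hn1).ne'
    rw [log_div hfloor (by positivity), log_rpow hn0]
    field_simp
    ring
  simpa using (hinv.mul hratio).add_const (c * α) |>.congr' hsplit

/-- Under the local alternatives `d_n = c/log n`, with `h_n = ⌊n^α⌋`, `α ∈ (0,1)`,
`h_n⁻¹ Σ_{l=0}^{h_n-1} (Σ_{j=0}^{l} ψ_j(d_n))² → e^{2cα}`. -/
theorem stmt_9 (c α : ℝ) (hc : 0 < c) (hα : α ∈ Set.Ioo (0 : ℝ) 1) :
    Tendsto (fun n : ℕ =>
        ((Nat.floor ((n : ℝ) ^ α) : ℝ))⁻¹ *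
          ∑ l ∈ Finset.range (Nat.floor ((n : ℝ) ^ α)),
            (∑ j ∈ Finset.range (l + 1), psi (c / Real.log n) j) ^ 2)
      atTop (nhds (Real.exp (2 * c * α))) := by
  have hlog : Tendsto (fun n : ℕ => log n) atTop atTop :=
    tendsto_log_atTop.comp tendsto_natCast_atTop_atTop
  have hd : Tendsto (fun n : ℕ => c / log n) atTop (𝓝 0) := tendsto_const_nhds.div_atTop hlog
  have hdh := tendsto_div_log_mul_log_floor_rpow c hα.1
  have hlower : Tendsto (fun n : ℕ => exp (2 * (c / log n) * (log ⌊(n : ℝ) ^ α⌋₊ - 1))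
      / (1 + 2 * (c / log n))) atTop (𝓝 (exp (2 * c * α))) := by
    convert ((hdh.sub hd).const_mul 2).rexp.div
      ((tendsto_const_nhds (x := (1 : ℝ))).add (hd.const_mul 2)) (by norm_num) using 1
    · ext n
      simp only [Pi.div_apply]
      ring_nf
    · norm_num
      ring_nf
  have hupper : Tendsto (fun n : ℕ => exp (2 * (c / log n) * (1 + log ⌊(n : ℝ) ^ α⌋₊)))
      atTop (𝓝 (exp (2 * c * α))) := by
    convert ((hd.add hdh).const_mul 2).rexp using 2 <;> ring_nf
  refine tendsto_of_tendsto_of_tendsto_of_le_of_le' hlower hupper ?_ ?_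
  · filter_upwards [hlog.eventually_gt_atTop 0, hd.eventually (ge_mem_nhds one_half_pos),
      ((tendsto_rpow_atTop hα.1).comp tendsto_natCast_atTop_atTop).eventually_ge_atTop 1]
      with n hn hdn hn1
    exact exp_le_avg_sq_sum_psi (div_pos hc hn) (by linarith) (Nat.floor_pos.2 hn1).ne'
  · filter_upwards [hlog.eventually_gt_atTop 0] with n hn
    exact avg_sq_sum_psi_le (div_pos hc hn) _
end

section
/- Let (X_i)_{i=1}^n be a zero-mean m-dependent sequence in L^4 with sup_i ||X_i||_4 ≤ M, and let K be a bounded kernel supported on [-1,1], b_n a bandwidth. Then max_{1≤i≤n} ||Σ_{j=1}^n K((t_i - t_j)/b_n) X_j||_4 = O(√(nb_n)·m), where t_j = j/n. -/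
/-!
Write `w_j = K((t_i - t_j)/b)`. Only indices with `|i - j| ≤ nb` carry a nonzero weight, and there
are at most `2nb + 1 ≤ 4nb` of them. Split them into residue classes mod `m + 1`: indices in one
class are more than `m` apart, so by `m`-dependence each term of a class is independent of the sum
of the earlier ones. For independent zero-mean `T`, `Y` one has
`E(T + Y)⁴ = E T⁴ + 6 E T² E Y² + E Y⁴`, so by induction a class of `k` terms, each of `L⁴`-norm at
most `B`, has fourth moment at most `3k²B⁴`, i.e. `L⁴`-norm at most `2B√k`. Minkowski's inequality
over the `m + 1` classes gives the bound with `C = 4`.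
-/

open Real MeasureTheory ProbabilityTheory Finset
open scoped ENNReal

section Moments

variable {Ω : Type*} [MeasurableSpace Ω] {μ : Measure Ω}

theorem MeasureTheory.MemLp.integrable_pow_of_le [IsFiniteMeasure μ] {f : Ω → ℝ} {p : ℝ≥0∞}
    {k : ℕ} (hf : MemLp f p μ) (hk : (k : ℝ≥0∞) ≤ p) : Integrable (fun ω => f ω ^ k) μ :=
  (hf.mono_exponent hk).integrable_norm_pow'.mono' (hf.aestronglyMeasurable.pow k)
    (ae_of_all _ fun ω => by simp [norm_pow])

theorem eLpNorm_le_ofReal_iff_integral_abs_pow_le {f : Ω → ℝ} {k : ℕ} (hk : k ≠ 0)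
    (hf : MemLp f k μ) {D : ℝ} (hD : 0 ≤ D) :
    eLpNorm f k μ ≤ ENNReal.ofReal D ↔ ∫ ω, |f ω| ^ k ∂μ ≤ D ^ k := by
  rw [hf.eLpNorm_eq_integral_rpow_norm (by simpa) (by simp), ENNReal.ofReal_le_ofReal_iff hD]
  simp only [ENNReal.toReal_natCast, Real.norm_eq_abs, Real.rpow_natCast]
  rw [Real.rpow_inv_le_iff_of_pos (integral_nonneg fun ω => by positivity) hD (by positivity),
    Real.rpow_natCast]

theorem integral_sum_eq_zero {ι : Type*} {Y : ι → Ω → ℝ} {s : Finset ι}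
    (hY : ∀ j, Integrable (Y j) μ) (hY0 : ∀ j, μ[Y j] = 0) : ∫ ω, ∑ j ∈ s, Y j ω ∂μ = 0 := by
  rw [integral_finsetSum s fun j _ => hY j]
  exact sum_eq_zero fun j _ => hY0 j

theorem ProbabilityTheory.IndepFun.integral_add_pow [IsFiniteMeasure μ] {T Y : Ω → ℝ}
    (hTY : IndepFun T Y μ) {n : ℕ} (hT : MemLp T n μ) (hY : MemLp Y n μ) :
    ∫ ω, (T ω + Y ω) ^ n ∂μ =
      ∑ k ∈ range (n + 1), (∫ ω, T ω ^ k ∂μ) * (∫ ω, Y ω ^ (n - k) ∂μ) * n.choose k := by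
  have hind : ∀ k ∈ range (n + 1), IndepFun (fun ω => T ω ^ k) (fun ω => Y ω ^ (n - k)) μ :=
    fun k _ => hTY.comp (measurable_id.pow_const k) (measurable_id.pow_const (n - k))
  have hT' : ∀ k ∈ range (n + 1), Integrable (fun ω => T ω ^ k) μ := fun k hk =>
    hT.integrable_pow_of_le (by exact_mod_cast Nat.lt_succ_iff.mp (mem_range.mp hk))
  have hY' : ∀ k, Integrable (fun ω => Y ω ^ (n - k)) μ := fun k =>
    hY.integrable_pow_of_le (by exact_mod_cast Nat.sub_le n k)
  simp_rw [add_pow]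
  rw [integral_finsetSum (f := fun k ω => T ω ^ k * Y ω ^ (n - k) * n.choose k) _
    fun k hk => ((hind k hk).integrable_mul (hT' k hk) (hY' k)).mul_const _]
  refine sum_congr rfl fun k hk => ?_
  rw [integral_mul_const,
    (hind k hk).integral_fun_mul_eq_mul_integral (hT' k hk).1 (hY' k).1]

variable [IsProbabilityMeasure μ]

theorem integral_abs_pow_le_of_eLpNorm_le {f : Ω → ℝ} {p : ℝ≥0∞} {k : ℕ} (hk : k ≠ 0)
    (hkp : (k : ℝ≥0∞) ≤ p) (hf : MemLp f p μ) {M : ℝ} (hM : 0 ≤ M)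
    (hfM : eLpNorm f p μ ≤ ENNReal.ofReal M) : ∫ ω, |f ω| ^ k ∂μ ≤ M ^ k :=
  (eLpNorm_le_ofReal_iff_integral_abs_pow_le hk (hf.mono_exponent hkp) hM).1
    ((eLpNorm_le_eLpNorm_of_exponent_le hkp hf.aestronglyMeasurable).trans hfM)

theorem ProbabilityTheory.IndepFun.integral_add_sq {T Y : Ω → ℝ} (hTY : IndepFun T Y μ)
    (hT : MemLp T 2 μ) (hY : MemLp Y 2 μ) (hT0 : μ[T] = 0) (hY0 : μ[Y] = 0) :
    ∫ ω, (T ω + Y ω) ^ 2 ∂μ = ∫ ω, T ω ^ 2 ∂μ + ∫ ω, Y ω ^ 2 ∂μ := by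
  rw [hTY.integral_add_pow (n := 2) (by simpa using hT) (by simpa using hY)]
  simp only [sum_range_succ, range_one, sum_singleton, pow_zero, pow_one, integral_const,
    probReal_univ, smul_eq_mul, mul_one, one_mul, tsub_zero, Nat.add_one_sub_one, tsub_self,
    Nat.choose_zero_right, Nat.choose_succ_self_right, Nat.choose_self, Nat.cast_one,
    Nat.cast_ofNat, hT0, hY0, mul_zero, zero_mul, add_zero, Nat.reduceAdd]
  ring

theorem ProbabilityTheory.IndepFun.integral_add_pow_four {T Y : Ω → ℝ} (hTY : IndepFun T Y μ)
    (hT : MemLp T 4 μ) (hY : MemLp Y 4 μ) (hT0 : μ[T] = 0) (hY0 : μ[Y] = 0) :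
    ∫ ω, (T ω + Y ω) ^ 4 ∂μ =
      ∫ ω, T ω ^ 4 ∂μ + 6 * (∫ ω, T ω ^ 2 ∂μ) * (∫ ω, Y ω ^ 2 ∂μ) + ∫ ω, Y ω ^ 4 ∂μ := by
  rw [hTY.integral_add_pow (n := 4) (by simpa using hT) (by simpa using hY)]
  simp only [sum_range_succ, range_one, sum_singleton, pow_zero, pow_one, integral_const,
    probReal_univ, smul_eq_mul, mul_one, one_mul, tsub_zero, Nat.add_one_sub_one, tsub_self,
    Nat.choose, Nat.cast_one, Nat.cast_ofNat, Nat.reduceSub, hT0, hY0, mul_zero, zero_mul,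
    add_zero, Nat.reduceAdd]
  ring

end Moments

section SequentialIndependence

variable {Ω : Type*} [MeasurableSpace Ω] {μ : Measure Ω}
  {ι : Type*} [LinearOrder ι] {Y : ι → Ω → ℝ}

theorem indepFun_sum_of_insert_max {s : Finset ι} {a : ι} (ha : ∀ x ∈ s, x < a)
    (hind : ∀ r ∈ insert a s, IndepFun (fun ω => ∑ j ∈ insert a s with j < r, Y j ω) (Y r) μ) :
    IndepFun (fun ω => ∑ j ∈ s, Y j ω) (Y a) μ ∧
      ∀ r ∈ s, IndepFun (fun ω => ∑ j ∈ s with j < r, Y j ω) (Y r) μ := by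
  refine ⟨?_, fun r hr => ?_⟩
  · simpa [filter_insert, filter_true_of_mem ha] using hind a (mem_insert_self a s)
  · simpa [filter_insert, (ha r hr).not_gt] using hind r (mem_insert_of_mem hr)

variable [IsProbabilityMeasure μ]

theorem integral_sum_sq_le {B : ℝ} (hY : ∀ j, MemLp (Y j) 2 μ) (hY0 : ∀ j, μ[Y j] = 0)
    (hB : ∀ j, ∫ ω, Y j ω ^ 2 ∂μ ≤ B ^ 2) {S : Finset ι}
    (hind : ∀ r ∈ S, IndepFun (fun ω => ∑ j ∈ S with j < r, Y j ω) (Y r) μ) :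
    ∫ ω, (∑ j ∈ S, Y j ω) ^ 2 ∂μ ≤ #S * B ^ 2 := by
  induction S using Finset.induction_on_max with
  | empty => simp
  | insert a s ha ih =>
    obtain ⟨hsa, hs⟩ := indepFun_sum_of_insert_max ha hind
    have has : a ∉ s := fun h => (ha a h).false
    simp_rw [sum_insert has, add_comm (Y a _)]
    rw [hsa.integral_add_sq (memLp_finsetSum s fun j _ => hY j) (hY a)
      (integral_sum_eq_zero (fun j => (hY j).integrable one_le_two) hY0) (hY0 a),
      card_insert_of_notMem has]
    push_cast
    linarith [ih hs, hB a]

theorem integral_sum_pow_four_le {B : ℝ} (hY : ∀ j, MemLp (Y j) 4 μ) (hY0 : ∀ j, μ[Y j] = 0)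
    (hB2 : ∀ j, ∫ ω, Y j ω ^ 2 ∂μ ≤ B ^ 2) (hB4 : ∀ j, ∫ ω, Y j ω ^ 4 ∂μ ≤ B ^ 4) {S : Finset ι}
    (hind : ∀ r ∈ S, IndepFun (fun ω => ∑ j ∈ S with j < r, Y j ω) (Y r) μ) :
    ∫ ω, (∑ j ∈ S, Y j ω) ^ 4 ∂μ ≤ 3 * #S ^ 2 * B ^ 4 := by
  have hY2 : ∀ j, MemLp (Y j) 2 μ := fun j => (hY j).mono_exponent (by norm_num)
  induction S using Finset.induction_on_max with
  | empty => simp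
  | insert a s ha ih =>
    obtain ⟨hsa, hs⟩ := indepFun_sum_of_insert_max ha hind
    have has : a ∉ s := fun h => (ha a h).false
    simp_rw [sum_insert has, add_comm (Y a _)]
    rw [hsa.integral_add_pow_four (memLp_finsetSum s fun j _ => hY j) (hY a)
      (integral_sum_eq_zero (fun j => (hY j).integrable (by norm_num)) hY0) (hY0 a),
      card_insert_of_notMem has]
    have h2s := integral_sum_sq_le hY2 hY0 hB2 hs
    have h2a : 0 ≤ ∫ ω, Y a ω ^ 2 ∂μ := integral_nonneg fun ω => sq_nonneg _
    push_cast
    nlinarith [ih hs, hB4 a, mul_le_mul h2s (hB2 a) h2a (by positivity), sq_nonneg B]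

end SequentialIndependence

section MDependence

variable {Ω : Type*} [MeasurableSpace Ω] {μ : Measure Ω}

def IsMDependent (X : ℕ → Ω → ℝ) (m : ℕ) (μ : Measure Ω) : Prop :=
  ∀ a : ℕ, IndepFun (fun ω (i : {i : ℕ // i ≤ a}) => X i ω)
    (fun ω (j : {j : ℕ // a + m < j}) => X j ω) μ

variable {X : ℕ → Ω → ℝ} {m : ℕ}

theorem IsMDependent.const_mul (hX : IsMDependent X m μ) (c : ℕ → ℝ) :
    IsMDependent (fun j ω => c j * X j ω) m μ := fun a =>
  (hX a).comp (φ := fun (f : {i : ℕ // i ≤ a} → ℝ) (i : {i : ℕ // i ≤ a}) => c i * f i)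
    (ψ := fun (g : {j : ℕ // a + m < j} → ℝ) (j : {j : ℕ // a + m < j}) => c j * g j)
    (by fun_prop) (by fun_prop)

theorem IsMDependent.indepFun_sum [IsProbabilityMeasure μ] (hX : IsMDependent X m μ)
    {s : Finset ℕ} {r : ℕ} (hsr : ∀ j ∈ s, j + m < r) :
    IndepFun (fun ω => ∑ j ∈ s, X j ω) (X r) μ := by
  rcases s.eq_empty_or_nonempty with rfl | ⟨x, hx⟩
  · simpa using indepFun_const_left (μ := μ) (0 : ℝ) (X r)
  have hr : r - (m + 1) + m < r := by have := hsr x hx; omega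
  have hs : ∀ j ∈ s, j ≤ r - (m + 1) := fun j hj => by have := hsr j hj; omega
  exact (hX (r - (m + 1))).comp
    (φ := fun (f : {i : ℕ // i ≤ r - (m + 1)} → ℝ) => ∑ j ∈ s.attach, f ⟨j, hs j j.2⟩)
    (ψ := fun (g : {j : ℕ // r - (m + 1) + m < j} → ℝ) => g ⟨r, hr⟩)
    (by fun_prop) (by fun_prop) |>.congr (ae_of_all _ fun ω => sum_attach s fun j => X j ω)
      (ae_of_all _ fun _ => rfl)

end MDependence

theorem Nat.add_lt_of_lt_of_mod_eq {m x y : ℕ} (hxy : x < y) (h : x % (m + 1) = y % (m + 1)) :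
    x + m < y := by
  have := Nat.le_of_dvd (Nat.sub_pos_of_lt hxy) ((Nat.modEq_iff_dvd' hxy.le).1 h)
  omega

section MDependentSums

variable {Ω : Type*} [MeasurableSpace Ω] {μ : Measure Ω} [IsProbabilityMeasure μ]
  {X : ℕ → Ω → ℝ} {m : ℕ} {B : ℝ}

theorem IsMDependent.eLpNorm_sum_le_of_mod_eq (hX : IsMDependent X m μ)
    (hX4 : ∀ j, MemLp (X j) 4 μ) (hX0 : ∀ j, μ[X j] = 0) (hB : 0 ≤ B)
    (hXB : ∀ j, eLpNorm (X j) 4 μ ≤ ENNReal.ofReal B) {S : Finset ℕ} {t : ℕ}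
    (hS : ∀ j ∈ S, j % (m + 1) = t) :
    eLpNorm (fun ω => ∑ j ∈ S, X j ω) 4 μ ≤ ENNReal.ofReal (2 * B * √(#S)) := by
  have hind : ∀ r ∈ S, IndepFun (fun ω => ∑ j ∈ S with j < r, X j ω) (X r) μ := fun r hr =>
    hX.indepFun_sum fun j hj => by
      obtain ⟨hjS, hjr⟩ := mem_filter.1 hj
      exact Nat.add_lt_of_lt_of_mod_eq hjr ((hS j hjS).trans (hS r hr).symm)
  have hB2 : ∀ j, ∫ ω, X j ω ^ 2 ∂μ ≤ B ^ 2 := fun j => by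
    simpa [even_two.pow_abs] using
      integral_abs_pow_le_of_eLpNorm_le (k := 2) two_ne_zero (by norm_num) (hX4 j) hB (hXB j)
  have hB4 : ∀ j, ∫ ω, X j ω ^ 4 ∂μ ≤ B ^ 4 := fun j => by
    simpa [(by decide : Even 4).pow_abs] using
      integral_abs_pow_le_of_eLpNorm_le (k := 4) four_ne_zero le_rfl (hX4 j) hB (hXB j)
  have hsum4 : MemLp (fun ω => ∑ j ∈ S, X j ω) (4 : ℕ) μ := by
    simpa using memLp_finsetSum S fun j _ => hX4 j
  rw [show (4 : ℝ≥0∞) = (4 : ℕ) by norm_num,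
    eLpNorm_le_ofReal_iff_integral_abs_pow_le four_ne_zero hsum4 (by positivity)]
  calc ∫ ω, |∑ j ∈ S, X j ω| ^ 4 ∂μ = ∫ ω, (∑ j ∈ S, X j ω) ^ 4 ∂μ := by
        simp only [(by decide : Even 4).pow_abs]
    _ ≤ 3 * #S ^ 2 * B ^ 4 := integral_sum_pow_four_le hX4 hX0 hB2 hB4 hind
    _ ≤ (2 * B * √(#S)) ^ 4 := by
        rw [mul_pow, mul_pow, show (√(#S) : ℝ) ^ 4 = #S ^ 2 by
          rw [show 4 = 2 * 2 by rfl, pow_mul, sq_sqrt (Nat.cast_nonneg _)]]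
        nlinarith [pow_nonneg hB 4, sq_nonneg (#S : ℝ)]

theorem IsMDependent.eLpNorm_sum_le (hX : IsMDependent X m μ)
    (hX4 : ∀ j, MemLp (X j) 4 μ) (hX0 : ∀ j, μ[X j] = 0) (hB : 0 ≤ B)
    (hXB : ∀ j, eLpNorm (X j) 4 μ ≤ ENNReal.ofReal B) (A : Finset ℕ) :
    eLpNorm (fun ω => ∑ j ∈ A, X j ω) 4 μ ≤ ENNReal.ofReal ((m + 1) * (2 * B * √(#A))) := by
  have hsplit : (fun ω => ∑ j ∈ A, X j ω) =
      ∑ t ∈ range (m + 1), fun ω => ∑ j ∈ A with j % (m + 1) = t, X j ω := by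
    ext ω
    rw [Finset.sum_apply, sum_fiberwise_of_maps_to (g := (· % (m + 1)))
      fun j _ => mem_range.2 (j.mod_lt m.succ_pos)]
  have hclass : ∀ t, eLpNorm (fun ω => ∑ j ∈ A with j % (m + 1) = t, X j ω) 4 μ ≤
      ENNReal.ofReal (2 * B * √(#A)) := fun t =>
    (hX.eLpNorm_sum_le_of_mod_eq hX4 hX0 hB hXB fun j hj => (mem_filter.1 hj).2).trans <|
      ENNReal.ofReal_le_ofReal <| by
        gcongr
        exact filter_subset _ _
  calc eLpNorm (fun ω => ∑ j ∈ A, X j ω) 4 μ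
      ≤ ∑ t ∈ range (m + 1), eLpNorm (fun ω => ∑ j ∈ A with j % (m + 1) = t, X j ω) 4 μ := by
        rw [hsplit]
        exact MeasureTheory.eLpNorm_sum_le (fun t _ => (memLp_finsetSum _ fun j _ => hX4 j).1)
          (by norm_num)
    _ ≤ ∑ t ∈ range (m + 1), ENNReal.ofReal (2 * B * √(#A)) := sum_le_sum fun t _ => hclass t
    _ = ENNReal.ofReal ((m + 1) * (2 * B * √(#A))) := by
        rw [sum_const, card_range, nsmul_eq_mul, ← ENNReal.ofReal_natCast,
          ← ENNReal.ofReal_mul (by positivity)]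
        push_cast
        rfl

end MDependentSums

theorem card_le_of_forall_abs_sub_le {A : Finset ℕ} {i : ℕ} {h : ℝ} (hh : 0 ≤ h)
    (hA : ∀ j ∈ A, |(i : ℝ) - j| ≤ h) : (#A : ℝ) ≤ 2 * h + 1 := by
  set F := ⌊h⌋₊
  have hF : h < F + 1 := Nat.lt_floor_add_one h
  have hsub : A ⊆ Icc (i - F) (i + F) := fun j hj => by
    obtain ⟨hij, hji⟩ := abs_le.1 (hA j hj)
    have hj : j < i + F + 1 := by exact_mod_cast (by linarith : (j : ℝ) < i + F + 1)
    have hi : i < j + F + 1 := by exact_mod_cast (by linarith : (i : ℝ) < j + F + 1)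
    rw [mem_Icc]
    omega
  calc (#A : ℝ) ≤ #(Icc (i - F) (i + F)) := by exact_mod_cast card_le_card hsub
    _ ≤ 2 * F + 1 := by rw [Nat.card_Icc]; exact_mod_cast (by omega)
    _ ≤ 2 * h + 1 := by linarith [Nat.floor_le hh]

theorem card_filter_kernel_ne_zero_le {K : ℝ → ℝ}
    (hK : ∀ x, x ∉ Set.Icc (-1 : ℝ) 1 → K x = 0) (s : Finset ℕ) {n i : ℕ} {b : ℝ}
    (hnb : 1 ≤ (n : ℝ) * b) :
    (#{j ∈ s | K (((i : ℝ) / n - ((j : ℕ) : ℝ) / n) / b) ≠ 0} : ℝ) ≤ 4 * (n * b) := by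
  have hnb0 : 0 < (n : ℝ) * b := one_pos.trans_le hnb
  refine (card_le_of_forall_abs_sub_le (i := i) hnb0.le fun j hj => ?_).trans (by linarith)
  have hKj : |((i : ℝ) / n - (j : ℝ) / n) / b| ≤ 1 :=
    abs_le.2 (not_not.1 fun h => (mem_filter.1 hj).2 (hK _ h))
  rwa [div_sub_div_same, div_div, abs_div, abs_of_pos hnb0, div_le_one hnb0] at hKj

theorem eLpNorm_const_mul_le {Ω : Type*} [MeasurableSpace Ω] {μ : Measure Ω} {f : Ω → ℝ}
    {p : ℝ≥0∞} {c κ M : ℝ} (hκ : 0 ≤ κ) (hc : |c| ≤ κ) (hf : eLpNorm f p μ ≤ ENNReal.ofReal M) :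
    eLpNorm (fun ω => c * f ω) p μ ≤ ENNReal.ofReal (κ * M) := by
  rw [ENNReal.ofReal_mul hκ]
  calc eLpNorm (fun ω => c * f ω) p μ = ‖c‖ₑ * eLpNorm f p μ := eLpNorm_const_smul c f p μ
    _ ≤ _ := by
        rw [← ofReal_norm]
        exact mul_le_mul' (ENNReal.ofReal_le_ofReal hc) hf

/-- Kernel-weighted sums of an m-dependent zero-mean array: there is a universal
constant `C` (depending only on the `L⁴` Burkholder constant) such that for every
kernel `K` bounded by `κ` and supported on `[-1,1]`, bandwidth `b` with `nb ≥ 1`,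
and zero-mean m-dependent array `(X_i)` with `sup_i ‖X_i‖_{L⁴} ≤ M`,
`max_{1≤i≤n} ‖Σ_{j=1}^n K((t_i - t_j)/b) X_j‖_{L⁴} ≤ C κ M (m+1) √(nb)`,
where `t_j = j/n`. -/
theorem stmt_16 :
    ∃ C : ℝ, 0 < C ∧
    ∀ (Ω : Type) [MeasurableSpace Ω] (μ : Measure Ω), IsProbabilityMeasure μ →
    ∀ (κ : ℝ), 0 < κ →
    ∀ (K : ℝ → ℝ), (∀ x, |K x| ≤ κ) → (∀ x, x ∉ Set.Icc (-1 : ℝ) 1 → K x = 0) →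
    ∀ (n m : ℕ) (b : ℝ), 0 < b → 1 ≤ (n : ℝ) * b →
    ∀ (X : ℕ → Ω → ℝ), (∀ i, Measurable (X i)) →
    (∀ i, MemLp (X i) 4 μ) →
    (∀ i, ∫ ω, X i ω ∂μ = 0) →
    ∀ (M : ℝ), 0 ≤ M → (∀ i, eLpNorm (X i) 4 μ ≤ ENNReal.ofReal M) →
    (∀ a : ℕ, IndepFun (fun ω => fun i : {i : ℕ // i ≤ a} => X (i : ℕ) ω)
        (fun ω => fun j : {j : ℕ // a + m < j} => X (j : ℕ) ω) μ) →
    ∀ i : ℕ, 1 ≤ i → i ≤ n →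
      eLpNorm (fun ω => ∑ j ∈ Finset.Icc 1 n,
          K (((i : ℝ) / n - (j : ℝ) / n) / b) * X j ω) 4 μ ≤
        ENNReal.ofReal (C * κ * M * ((m : ℝ) + 1) * Real.sqrt ((n : ℝ) * b)) := by
  refine ⟨4, by norm_num, ?_⟩
  intro Ω _ μ _ κ hκ K hKκ hKsupp n m b _ hnb X _ hX4 hX0 M hM hXM hdep i _ _
  set c : ℕ → ℝ := fun j => K (((i : ℝ) / n - (j : ℝ) / n) / b)
  set A := {j ∈ Icc 1 n | c j ≠ 0}
  have hA : (#A : ℝ) ≤ 4 * (n * b) := card_filter_kernel_ne_zero_le hKsupp _ hnb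
  have hsqrt : √(#A) ≤ 2 * √(n * b) := calc
    √(#A) ≤ √(2 ^ 2 * (n * b)) := sqrt_le_sqrt (by linarith)
    _ = 2 * √(n * b) := by rw [sqrt_mul (by positivity), sqrt_sq zero_le_two]
  calc eLpNorm (fun ω => ∑ j ∈ Icc 1 n, c j * X j ω) 4 μ
      = eLpNorm (fun ω => ∑ j ∈ A, c j * X j ω) 4 μ :=
        congrArg (eLpNorm · 4 μ) <|
          funext fun ω => (sum_filter_of_ne fun j _ hj => left_ne_zero_of_mul hj).symm
    _ ≤ ENNReal.ofReal ((m + 1) * (2 * (κ * M) * √(#A))) :=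
        (IsMDependent.const_mul hdep c).eLpNorm_sum_le (fun j => (hX4 j).const_mul _)
          (fun j => by simp [integral_const_mul, hX0]) (by positivity)
          (fun j => eLpNorm_const_mul_le hκ.le (hKκ _) (hXM j)) A
    _ ≤ ENNReal.ofReal (4 * κ * M * (m + 1) * √(n * b)) := by
        refine ENNReal.ofReal_le_ofReal ?_
        calc (m + 1) * (2 * (κ * M) * √(#A))
            ≤ (m + 1) * (2 * (κ * M) * (2 * √(n * b))) := by gcongr
          _ = 4 * κ * M * (m + 1) * √(n * b) := by ring
end
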